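/- For all I, J ∈ B_{k,n}: a_J(ξ_n(I)) = exp(i(k−1)π(⟨I⟩−⟨J⟩)/n) · a_I(ξ_n(J)). Consequently, S_J(ξ_n(I)) · S_I(ξ_n(I_0)) = S_I(ξ_n(J)) · S_J(ξ_n(I_0)), i.e. S_J(ξ_n(I)) = (S_J(ξ_n(I_0))/S_I(ξ_n(I_0))) · S_I(ξ_n(J)) whenever S_I(ξ_n(I_0)) ≠ 0. -/

import Mathlib

/-!
Since `ξ_n(I)_l · J_m = 2π I_l J_m / n - π (k-1) J_m / n`, the matrix of `a_J(ξ_n(I))` is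
`F(I, J) = (e^{2πi I_l J_m / n})_{l,m}` with its `m`-th column scaled by `e^{-iπ(k-1)J_m/n}`.
As `F(I, J)ᵀ = F(J, I)`, this gives the symmetry relation. For `I = I_0` it reads
`a_J(ξ_n(I_0)) = e^{iπ(k-1)(⟨I_0⟩-⟨J⟩)/n} V(ξ_n(J))`, and the relation between the Schur
evaluations follows by cancelling `V(ξ_n(I))` and `V(ξ_n(J))`. These are nonzero: up to a phase,
`V(ξ_n(I))` is the Vandermonde determinant of the distinct `n`-th roots of unity `e^{2πi I_l/n}`.
-/

noncomputable section

open Finset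

namespace Paper

def aJ (k : ℕ) (J : Fin k → ℤ) (u : Fin k → ℝ) : ℂ :=
  Matrix.det (Matrix.of fun l m : Fin k => Complex.exp (Complex.I * (u l : ℂ) * (J m : ℂ)))

def I0 (k : ℕ) : Fin k → ℤ := fun i => (k : ℤ) - 1 - (i : ℤ)

def Vdm (k : ℕ) (u : Fin k → ℝ) : ℂ := aJ k (I0 k) u

def SJ (k : ℕ) (J : Fin k → ℤ) (u : Fin k → ℝ) : ℂ := aJ k J u / Vdm k u

def xi (k n : ℕ) (I : Fin k → ℤ) : Fin k → ℝ :=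
  fun j => (2 * Real.pi / (n : ℝ)) * ((I j : ℝ) - ((k : ℝ) - 1) / 2)

def sz (k : ℕ) (I : Fin k → ℤ) : ℤ := ∑ i, I i

open Matrix

def twist (k n : ℕ) (d : ℂ) : ℂ :=
  Complex.exp (Complex.I * ((k : ℂ) - 1) * (Real.pi : ℂ) * d / (n : ℂ))

lemma twist_add (k n : ℕ) (d e : ℂ) : twist k n (d + e) = twist k n d * twist k n e := by
  rw [twist, twist, twist, ← Complex.exp_add]
  congr 1
  ring

def fourierMatrix {k : ℕ} (n : ℕ) (I J : Fin k → ℤ) : Matrix (Fin k) (Fin k) ℂ :=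
  of fun l m => Complex.exp (2 * Real.pi * Complex.I * I l * J m / n)

lemma fourierMatrix_transpose {k : ℕ} (n : ℕ) (I J : Fin k → ℤ) :
    (fourierMatrix n I J)ᵀ = fourierMatrix n J I := by
  ext l m
  simp only [fourierMatrix, transpose_apply, of_apply]
  ring_nf

lemma aJ_xi_eq_twist_mul_det (k n : ℕ) (I J : Fin k → ℤ) :
    aJ k J (xi k n I) = twist k n (-(sz k J : ℂ)) * (fourierMatrix n I J).det := by
  have hentry : (of fun l m : Fin k => Complex.exp (Complex.I * (xi k n I l : ℂ) * (J m : ℂ))) =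
      of fun l m => twist k n (-(J m : ℂ)) * fourierMatrix n I J l m := by
    ext l m
    simp only [of_apply, twist, fourierMatrix, xi, ← Complex.exp_add]
    push_cast
    ring_nf
  have hprod : ∏ m, twist k n (-(J m : ℂ)) = twist k n (-(sz k J : ℂ)) := by
    simp only [twist, ← Complex.exp_sum, sz]
    push_cast
    simp only [mul_neg, neg_div, Finset.mul_sum, Finset.sum_div, Finset.sum_neg_distrib]
  rw [aJ, hentry, det_mul_row, hprod]

lemma aJ_xi_symm (k n : ℕ) (I J : Fin k → ℤ) :
    aJ k J (xi k n I) = twist k n ((sz k I : ℂ) - sz k J) * aJ k I (xi k n J) := by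
  rw [aJ_xi_eq_twist_mul_det, aJ_xi_eq_twist_mul_det, ← det_transpose, fourierMatrix_transpose,
    ← mul_assoc, ← twist_add]
  ring_nf

lemma Vdm_ne_zero_iff (k : ℕ) (u : Fin k → ℝ) :
    Vdm k u ≠ 0 ↔ Function.Injective fun l => Complex.exp (Complex.I * u l) := by
  have hrev : (of fun l m : Fin k => Complex.exp (Complex.I * (u l : ℂ) * (I0 k m : ℂ))) =
      (vandermonde fun l => Complex.exp (Complex.I * u l)).submatrix id Fin.revPerm := by
    ext l m
    simp only [of_apply, submatrix_apply, vandermonde_apply, id_eq, Fin.revPerm_apply,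
      Fin.val_rev, I0, ← Complex.exp_nat_mul]
    push_cast [Nat.cast_sub m.isLt]
    ring_nf
  rw [Vdm, aJ, hrev, det_permute', ← det_vandermonde_ne_zero_iff]
  rcases Int.units_eq_one_or (Equiv.Perm.sign (Fin.revPerm : Equiv.Perm (Fin k))) with h | h <;>
    simp [h]

lemma exp_I_xi_injective (k n : ℕ) (I : Fin k → ℤ) (hI : Function.Injective I)
    (hIbd : ∀ i, 0 ≤ I i ∧ I i < (n : ℤ)) :
    Function.Injective fun l => Complex.exp (Complex.I * xi k n I l) := by
  intro l m hlm
  obtain ⟨t, ht⟩ := Complex.exp_eq_exp_iff_exists_int.mp hlm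
  obtain ⟨hl0, hln⟩ := hIbd l
  obtain ⟨hm0, hmn⟩ := hIbd m
  have hn : (n : ℝ) ≠ 0 := by exact_mod_cast (show (n : ℤ) ≠ 0 by omega)
  have hreal : xi k n I l = xi k n I m + t * (2 * Real.pi) := by
    apply Complex.ofReal_injective
    apply mul_left_cancel₀ Complex.I_ne_zero
    push_cast
    rw [ht]
    ring
  have hdiff : I l - I m = n * t := by
    simp only [xi] at hreal
    field_simp at hreal
    have : ((I l - I m : ℤ) : ℝ) = ((n * t : ℤ) : ℝ) := by
      push_cast
      linear_combination hreal / 2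
    exact_mod_cast this
  have hlt : |I l - I m| < n := abs_sub_lt_iff.2 ⟨by omega, by omega⟩
  exact hI (sub_eq_zero.mp (Int.eq_zero_of_abs_lt_dvd ⟨t, hdiff⟩ hlt))

lemma Vdm_xi_ne_zero (k n : ℕ) (I : Fin k → ℤ) (hI : StrictAnti I)
    (hIbd : ∀ i, 0 ≤ I i ∧ I i < (n : ℤ)) :
    Vdm k (xi k n I) ≠ 0 :=
  (Vdm_ne_zero_iff k _).2 (exp_I_xi_injective k n I hI.injective hIbd)

lemma SJ_mul_SJ_xi_I0 (k n : ℕ) (I J : Fin k → ℤ) (hI : Vdm k (xi k n I) ≠ 0) :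
    SJ k J (xi k n I) * SJ k I (xi k n (I0 k)) =
      twist k n ((sz k (I0 k) : ℂ) - sz k I) * aJ k J (xi k n I) / Vdm k (xi k n (I0 k)) := by
  have hI0 : aJ k I (xi k n (I0 k)) = twist k n ((sz k (I0 k) : ℂ) - sz k I) * Vdm k (xi k n I) :=
    aJ_xi_symm k n (I0 k) I
  rw [SJ, SJ, hI0]
  field_simp

theorem stmt7_general (k n : ℕ) (I J : Fin k → ℤ)
    (hIdec : ∀ i j : Fin k, i < j → I j < I i)
    (hIbd : ∀ i, 0 ≤ I i ∧ I i < (n : ℤ))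
    (hJdec : ∀ i j : Fin k, i < j → J j < J i)
    (hJbd : ∀ i, 0 ≤ J i ∧ J i < (n : ℤ)) :
    aJ k J (xi k n I) =
      Complex.exp (Complex.I * ((k : ℂ) - 1) * (Real.pi : ℂ) *
        ((sz k I : ℂ) - (sz k J : ℂ)) / (n : ℂ)) * aJ k I (xi k n J) ∧
    SJ k J (xi k n I) * SJ k I (xi k n (I0 k)) =
      SJ k I (xi k n J) * SJ k J (xi k n (I0 k)) ∧
    (SJ k I (xi k n (I0 k)) ≠ 0 →
      SJ k J (xi k n I) =
        SJ k J (xi k n (I0 k)) / SJ k I (xi k n (I0 k)) * SJ k I (xi k n J)) := by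
  have hsymm := aJ_xi_symm k n I J
  have hschur : SJ k J (xi k n I) * SJ k I (xi k n (I0 k)) =
      SJ k I (xi k n J) * SJ k J (xi k n (I0 k)) := by
    rw [SJ_mul_SJ_xi_I0 k n I J (Vdm_xi_ne_zero k n I hIdec hIbd),
      SJ_mul_SJ_xi_I0 k n J I (Vdm_xi_ne_zero k n J hJdec hJbd), hsymm, ← mul_assoc, ← twist_add]
    ring_nf
  refine ⟨hsymm, hschur, fun hI0 => ?_⟩
  rw [div_mul_eq_mul_div, eq_div_iff hI0]
  linear_combination hschur

/-- the symmetry relation `a_J(ξ_n(I)) = e^{i(k-1)π(⟨I⟩-⟨J⟩)/n} a_I(ξ_n(J))`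
for `I, J ∈ B_{k,n}`, and the resulting inversion formula for the Schur evaluations `S`. -/
theorem stmt7 (k n : ℕ) (hk : 1 ≤ k) (hkn : k ≤ n) (I J : Fin k → ℤ)
    (hIdec : ∀ i j : Fin k, i < j → I j < I i)
    (hIbd : ∀ i, 0 ≤ I i ∧ I i < (n : ℤ))
    (hJdec : ∀ i j : Fin k, i < j → J j < J i)
    (hJbd : ∀ i, 0 ≤ J i ∧ J i < (n : ℤ)) :
    aJ k J (xi k n I) =
      Complex.exp (Complex.I * ((k : ℂ) - 1) * (Real.pi : ℂ) *
        ((sz k I : ℂ) - (sz k J : ℂ)) / (n : ℂ)) * aJ k I (xi k n J) ∧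
    SJ k J (xi k n I) * SJ k I (xi k n (I0 k)) =
      SJ k I (xi k n J) * SJ k J (xi k n (I0 k)) ∧
    (SJ k I (xi k n (I0 k)) ≠ 0 →
      SJ k J (xi k n I) =
        SJ k J (xi k n (I0 k)) / SJ k I (xi k n (I0 k)) * SJ k I (xi k n J)) :=
  stmt7_general k n I J hIdec hIbd hJdec hJbd

end Paper
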